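/- (Lemma 2.1(iv), extrapolation gap vanishes) Both lim_{k→∞} ‖y^k − x^k‖₂ = 0 and lim_{k→∞} ‖y^{k−1} − x^k‖₂ = 0. -/

import Mathlib

/-!
The merit `ψ(xᵏ, xᵏ⁻¹, εᵏ)` drops by at least `(β/2)(1 - ᾱ²)‖xᵏ - xᵏ⁻¹‖²` at every step. Indeed the
subproblem objective is `β`-strongly convex with minimizer `xᵏ⁺¹`; up to a constant it majorizes
`F(·, εᵏ⁺¹)` at `xᵏ⁺¹` (descent lemma for `f`, tangent line of the concave `t ↦ tᵖ`, `εᵏ⁺¹ ≤ εᵏ`)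
and is dominated by `F(xᵏ, εᵏ) + (β/2)‖xᵏ - yᵏ‖²` at `xᵏ` (convexity of `f`), while
`‖xᵏ - yᵏ‖ ≤ ᾱ‖xᵏ - xᵏ⁻¹‖`. The iterates therefore stay in the bounded level set, where `f` is
bounded below, so the merit converges and `‖xᵏ - xᵏ⁻¹‖ → 0`; both gaps are bounded by such
differences.
-/

open Filter
open scoped BigOperators InnerProductSpace

noncomputable section

/-- Real n-dimensional Euclidean space. -/
abbrev Vec (n : ℕ) := EuclideanSpace ℝ (Fin n)

/-- The smoothed objective `F(x, ε) = f(x) + λ ∑ᵢ (|xᵢ| + εᵢ)^p`. -/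
def Fobj (n : ℕ) (p lam : ℝ) (f : Vec n → ℝ) (z : Vec n) (ε : Fin n → ℝ) : ℝ :=
  f z + lam * ∑ i, (|z i| + ε i) ^ p

/-- The merit function `ψ(x, y, ε) = F(x, ε) + (β/2)‖x − y‖²`. -/
def psiObj (n : ℕ) (p lam β : ℝ) (f : Vec n → ℝ) (z y : Vec n) (ε : Fin n → ℝ) : ℝ :=
  Fobj n p lam f z ε + β / 2 * ‖z - y‖ ^ 2

/-- The weighted-ℓ₁ subproblem objective at iteration `k`:
`⟨∇f(yₖ), z⟩ + (β/2)‖z − yₖ‖² + λ ∑ᵢ wᵢᵏ |zᵢ|` with `wᵢᵏ = p(|xᵢᵏ| + εᵢᵏ)^{p−1}`. -/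
def subObj (n : ℕ) (p lam β : ℝ) (f : Vec n → ℝ) (xk yk : Vec n) (εk : Fin n → ℝ)
    (z : Vec n) : ℝ :=
  ⟪gradient f yk, z⟫_ℝ + β / 2 * ‖z - yk‖ ^ 2
    + lam * ∑ i, (p * (|xk i| + εk i) ^ (p - 1)) * |z i|

/-- All the hypotheses of the EIRL1 algorithm (Algorithm 1) together with
Assumption 2.1.  The convention `x⁻¹ = x⁰` is encoded through truncated
subtraction on ℕ (`x (k-1) = x 0` for `k = 0`). -/
structure EIRL1 (n : ℕ) (p lam β Lf μ αbar : ℝ) (f : Vec n → ℝ)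
    (x y : ℕ → Vec n) (ε : ℕ → Fin n → ℝ) (α : ℕ → ℝ) : Prop where
  hn : 1 ≤ n
  hp0 : 0 < p
  hp1 : p < 1
  hlam : 0 < lam
  hμ0 : 0 < μ
  hμ1 : μ < 1
  hLf : 0 ≤ Lf
  hβ : Lf < β
  hconv : ConvexOn ℝ Set.univ f
  hdiff : ContDiff ℝ 1 f
  hlip : ∀ a b, ‖gradient f a - gradient f b‖ ≤ Lf * ‖a - b‖
  hαbar0 : 0 ≤ αbar
  hαbar1 : αbar < 1
  hα0 : ∀ k, 0 ≤ α k
  hα1 : ∀ k, α k ≤ αbar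
  hε0 : ∀ i, 0 < ε 0 i
  hεpos : ∀ k i, 0 < ε (k + 1) i
  hεdec : ∀ k i, ε (k + 1) i ≤ μ * ε k i
  hy : ∀ k, y k = x k + α k • (x k - x (k - 1))
  hmin : ∀ k z, z ≠ x (k + 1) →
    subObj n p lam β f (x k) (y k) (ε k) (x (k + 1)) < subObj n p lam β f (x k) (y k) (ε k) z
  hlevel : Bornology.IsBounded {z : Vec n | Fobj n p lam f z 0 ≤ Fobj n p lam f (x 0) (ε 0)}


open Set Topology

theorem Real.rpow_le_rpow_add_mul_sub {p s t : ℝ} (hp0 : 0 ≤ p) (hp1 : p ≤ 1) (hs : 0 < s)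
    (ht : 0 ≤ t) : t ^ p ≤ s ^ p + p * s ^ (p - 1) * (t - s) := by
  have hbern := rpow_one_add_le_one_add_mul_self (s := t / s - 1) (by
    have : 0 ≤ t / s := by positivity
    linarith) hp0 hp1
  rw [add_sub_cancel, Real.div_rpow ht hs.le, div_le_iff₀ (by positivity)] at hbern
  calc t ^ p ≤ (1 + p * (t / s - 1)) * s ^ p := hbern
    _ = s ^ p + p * (s ^ p / s) * (t - s) := by field_simp
    _ = s ^ p + p * s ^ (p - 1) * (t - s) := by rw [Real.rpow_sub_one hs.ne']

section Gradient

variable {E : Type*} [NormedAddCommGroup E] [InnerProductSpace ℝ E] [CompleteSpace E] {f : E → ℝ}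

theorem hasDerivAt_comp_add_smul {a v : E} {t : ℝ} (hf : DifferentiableAt ℝ f (a + t • v)) :
    HasDerivAt (fun s : ℝ => f (a + s • v)) ⟪gradient f (a + t • v), v⟫_ℝ t := by
  have hline : HasDerivAt (fun s : ℝ => a + s • v) v t := by
    simpa using ((hasDerivAt_id t).smul_const v).const_add a
  simpa [Function.comp_def] using
    (hasGradientAt_iff_hasFDerivAt.mp hf.hasGradientAt).comp_hasDerivAt t hline

theorem ConvexOn.add_inner_gradient_le (hconv : ConvexOn ℝ univ f) {a : E}
    (hf : DifferentiableAt ℝ f a) (b : E) : f a + ⟪gradient f a, b - a⟫_ℝ ≤ f b := by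
  have hline : ConvexOn ℝ univ fun t : ℝ => f (a + t • (b - a)) := by
    simpa [Function.comp_def, AffineMap.lineMap_apply_module', add_comm] using
      hconv.comp_affineMap (AffineMap.lineMap a b)
  have hderiv := hasDerivAt_comp_add_smul (a := a) (v := b - a) (t := 0) (by simpa using hf)
  have hslope := hline.le_slope_of_hasDerivAt (mem_univ 0) (mem_univ 1) one_pos hderiv
  simp only [zero_smul, add_zero, slope_def_field, one_smul, add_sub_cancel, sub_zero,
    div_one] at hslope
  linarith

theorem le_add_inner_gradient_add_half_mul_sq_norm (hf : Differentiable ℝ f) {L : ℝ}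
    (hlip : ∀ a b, ‖gradient f a - gradient f b‖ ≤ L * ‖a - b‖) (a b : E) :
    f b ≤ f a + ⟪gradient f a, b - a⟫_ℝ + L / 2 * ‖b - a‖ ^ 2 := by
  set v := b - a
  let φ : ℝ → ℝ := fun t => f (a + t • v) - t * ⟪gradient f a, v⟫_ℝ - L / 2 * t ^ 2 * ‖v‖ ^ 2
  have hφ : ∀ t, HasDerivAt φ
      (⟪gradient f (a + t • v), v⟫_ℝ - ⟪gradient f a, v⟫_ℝ - L / 2 * (2 * t) * ‖v‖ ^ 2) t :=
    fun t => by
      have hlin := (hasDerivAt_id t).mul_const ⟪gradient f a, v⟫_ℝ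
      have hquad := ((hasDerivAt_pow 2 t).const_mul (L / 2)).mul_const (‖v‖ ^ 2)
      exact (((hasDerivAt_comp_add_smul (hf (a + t • v))).sub hlin).sub hquad).congr_deriv
        (by norm_num)
  have hanti : AntitoneOn φ (Icc 0 1) := by
    refine antitoneOn_of_hasDerivWithinAt_nonpos (convex_Icc 0 1)
      (fun t _ => (hφ t).continuousAt.continuousWithinAt) (fun t _ => (hφ t).hasDerivWithinAt) ?_
    intro t ht
    rw [interior_Icc] at ht
    have hgrad : ⟪gradient f (a + t • v) - gradient f a, v⟫_ℝ ≤ L * t * ‖v‖ ^ 2 :=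
      calc _ ≤ ‖gradient f (a + t • v) - gradient f a‖ * ‖v‖ := real_inner_le_norm _ _
        _ ≤ L * ‖a + t • v - a‖ * ‖v‖ := by gcongr; exact hlip _ _
        _ = L * t * ‖v‖ ^ 2 := by
          rw [add_sub_cancel_left, norm_smul, Real.norm_of_nonneg ht.1.le]; ring
    rw [inner_sub_left] at hgrad
    linarith
  have h01 := hanti (left_mem_Icc.2 zero_le_one) (right_mem_Icc.2 zero_le_one) zero_le_one
  simp only [φ, zero_smul, add_zero, one_smul, zero_mul, one_mul, sub_zero, one_pow,
    add_sub_cancel, v] at h01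
  linarith

end Gradient

section StrongConvexity

variable {E : Type*} [NormedAddCommGroup E] [InnerProductSpace ℝ E] {s : Set E} {g : E → ℝ}

theorem ConvexOn.strongConvexOn_add_mul_sq_norm_sub (hg : ConvexOn ℝ s g) (m : ℝ) (c : E) :
    StrongConvexOn s m fun z => g z + m / 2 * ‖z - c‖ ^ 2 := by
  rw [strongConvexOn_iff_convex]
  have hlin : ConvexOn ℝ s fun z => -(m * ⟪z, c⟫_ℝ) :=
    (-(m • (innerₛₗ ℝ).flip c)).convexOn hg.1
  refine ((hg.add hlin).add_const (m / 2 * ‖c‖ ^ 2)).congr fun z _ => ?_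
  simp only [Pi.add_apply, norm_sub_sq_real]
  ring

theorem StrongConvexOn.add_mul_sq_norm_sub_le_of_isMinOn {m : ℝ} (hg : StrongConvexOn s m g)
    {x z : E} (hmin : IsMinOn g s x) (hx : x ∈ s) (hz : z ∈ s) : g x + m / 2 * ‖z - x‖ ^ 2 ≤ g z := by
  have key : ∀ t ∈ Ioo (0 : ℝ) 1, (1 - t) * (m / 2 * ‖z - x‖ ^ 2) ≤ g z - g x := by
    rintro t ⟨ht0, ht1⟩
    have hseg := hg.2 hx hz (by linarith : (0 : ℝ) ≤ 1 - t) ht0.le (by ring)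
    have hle : g x ≤ g ((1 - t) • x + t • z) := hmin (hg.1 hx hz (by linarith) ht0.le (by ring))
    rw [norm_sub_rev] at hseg
    simp only [smul_eq_mul] at hseg
    nlinarith
  have hlim : Tendsto (fun t : ℝ => (1 - t) * (m / 2 * ‖z - x‖ ^ 2)) (𝓝[>] 0)
      (𝓝 (m / 2 * ‖z - x‖ ^ 2)) := by
    refine tendsto_nhdsWithin_of_tendsto_nhds ?_
    exact ((continuous_const.sub continuous_id).mul continuous_const).tendsto' 0 _ (by simp)
  linarith [le_of_tendsto hlim (by filter_upwards [Ioo_mem_nhdsGT one_pos] using key)]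

end StrongConvexity

theorem tendsto_zero_of_add_le_of_bddBelow {u d : ℕ → ℝ} (hu : BddBelow (range u))
    (hd : ∀ k, 0 ≤ d k) (h : ∀ k, u (k + 1) + d k ≤ u k) : Tendsto d atTop (𝓝 0) := by
  have hu_lim := tendsto_atTop_ciInf (antitone_nat_of_succ_le fun k => by linarith [h k, hd k]) hu
  have hdiff : Tendsto (fun k => u k - u (k + 1)) atTop (𝓝 0) := by
    simpa using hu_lim.sub (hu_lim.comp (tendsto_add_atTop_nat 1))
  exact squeeze_zero hd (fun k => by linarith [h k]) hdiff

theorem convexOn_sum_mul_abs {ι : Type*} [Fintype ι] {w : ι → ℝ} (hw : ∀ i, 0 ≤ w i) :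
    ConvexOn ℝ univ fun z : EuclideanSpace ℝ ι => ∑ i, w i * |z i| := by
  refine ⟨convex_univ, fun u _ v _ a b ha hb _ => ?_⟩
  simp only [smul_eq_mul, Finset.mul_sum, ← Finset.sum_add_distrib]
  gcongr with i
  calc w i * |a * u i + b * v i| ≤ w i * (|a * u i| + |b * v i|) := by
        gcongr; · exact hw i
        exact abs_add_le _ _
    _ = a * (w i * |u i|) + b * (w i * |v i|) := by
        rw [abs_mul, abs_mul, abs_of_nonneg ha, abs_of_nonneg hb]; ring

theorem sum_rpow_le_sum_rpow_add_weighted_abs_sub {n : ℕ} {p : ℝ} (hp0 : 0 ≤ p) (hp1 : p ≤ 1)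
    {ε ε' : Fin n → ℝ} (hε : ∀ i, 0 < ε i) (hε' : ∀ i, 0 ≤ ε' i) (hle : ∀ i, ε' i ≤ ε i)
    (xk z : Vec n) :
    ∑ i, (|z i| + ε' i) ^ p ≤ ∑ i, (|xk i| + ε i) ^ p
      + (∑ i, p * (|xk i| + ε i) ^ (p - 1) * |z i|
        - ∑ i, p * (|xk i| + ε i) ^ (p - 1) * |xk i|) := by
  rw [← Finset.sum_sub_distrib, ← Finset.sum_add_distrib]
  gcongr with i
  have hs : 0 < |xk i| + ε i := by positivity [hε i]
  have hw : 0 ≤ p * (|xk i| + ε i) ^ (p - 1) := by positivity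
  calc (|z i| + ε' i) ^ p
      ≤ (|xk i| + ε i) ^ p + p * (|xk i| + ε i) ^ (p - 1) * (|z i| + ε' i - (|xk i| + ε i)) :=
        Real.rpow_le_rpow_add_mul_sub hp0 hp1 hs (by positivity [hε' i])
    _ ≤ (|xk i| + ε i) ^ p + p * (|xk i| + ε i) ^ (p - 1) * (|z i| - |xk i|) := by
        gcongr (_ + _ * ?_); linarith [hle i]
    _ = _ := by ring

theorem subObj_strongConvexOn {n : ℕ} {p lam : ℝ} (β : ℝ) (f : Vec n → ℝ) (xk yk : Vec n)
    {εk : Fin n → ℝ} (hp : 0 ≤ p) (hlam : 0 ≤ lam) (hε : ∀ i, 0 ≤ εk i) :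
    StrongConvexOn univ β (subObj n p lam β f xk yk εk) := by
  have hlin : ConvexOn ℝ univ fun z : Vec n => ⟪gradient f yk, z⟫_ℝ :=
    (innerₛₗ ℝ (gradient f yk)).convexOn convex_univ
  have hpen := (convexOn_sum_mul_abs (w := fun i => p * (|xk i| + εk i) ^ (p - 1))
    fun i => by positivity [hε i]).smul hlam
  have hsplit : subObj n p lam β f xk yk εk
      = fun z : Vec n => ⟪gradient f yk, z⟫_ℝ
          + lam • ∑ i, p * (|xk i| + εk i) ^ (p - 1) * |z i| + β / 2 * ‖z - yk‖ ^ 2 := by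
    funext z
    simp only [subObj, smul_eq_mul]
    ring
  rw [hsplit]
  exact (hlin.add hpen).strongConvexOn_add_mul_sq_norm_sub β yk

theorem le_Fobj_zero {n : ℕ} {p lam : ℝ} (hlam : 0 ≤ lam) (f : Vec n → ℝ) (z : Vec n) :
    f z ≤ Fobj n p lam f z 0 := by
  unfold Fobj
  exact le_add_of_nonneg_right <| mul_nonneg hlam <|
    Finset.sum_nonneg fun i _ => Real.rpow_nonneg (by simp) _

theorem Fobj_mono {n : ℕ} {p lam : ℝ} (hp : 0 ≤ p) (hlam : 0 ≤ lam) (f : Vec n → ℝ) (z : Vec n)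
    {ε ε' : Fin n → ℝ} (hε : 0 ≤ ε) (hle : ε ≤ ε') : Fobj n p lam f z ε ≤ Fobj n p lam f z ε' := by
  unfold Fobj
  gcongr with i
  · exact add_nonneg (abs_nonneg _) (hε i)
  · exact hle i

namespace EIRL1

variable {n : ℕ} {p lam β Lf μ αbar : ℝ} {f : Vec n → ℝ} {x y : ℕ → Vec n}
  {ε : ℕ → Fin n → ℝ} {α : ℕ → ℝ}

theorem beta_pos (H : EIRL1 n p lam β Lf μ αbar f x y ε α) : 0 < β :=
  H.hLf.trans_lt H.hβ

theorem beta_half_mul_one_sub_sq_pos (H : EIRL1 n p lam β Lf μ αbar f x y ε α) :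
    0 < β / 2 * (1 - αbar ^ 2) := by
  have : αbar ^ 2 < 1 := by nlinarith [H.hαbar0, H.hαbar1]
  have := H.beta_pos
  positivity [this]

theorem eps_pos (H : EIRL1 n p lam β Lf μ αbar f x y ε α) : ∀ k i, 0 < ε k i
  | 0, i => H.hε0 i
  | k + 1, i => H.hεpos k i

theorem eps_succ_le (H : EIRL1 n p lam β Lf μ αbar f x y ε α) (k : ℕ) (i : Fin n) :
    ε (k + 1) i ≤ ε k i :=
  (H.hεdec k i).trans (mul_le_of_le_one_left (H.eps_pos k i).le H.hμ1.le)

theorem isMinOn_subObj (H : EIRL1 n p lam β Lf μ αbar f x y ε α) (k : ℕ) :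
    IsMinOn (subObj n p lam β f (x k) (y k) (ε k)) univ (x (k + 1)) := isMinOn_iff.2 fun z _ => by
  rcases eq_or_ne z (x (k + 1)) with rfl | hz
  · exact le_rfl
  · exact (H.hmin k z hz).le

theorem psiObj_succ_le (H : EIRL1 n p lam β Lf μ αbar f x y ε α) (k : ℕ) :
    psiObj n p lam β f (x (k + 1)) (x k) (ε (k + 1))
      ≤ Fobj n p lam f (x k) (ε k) + β / 2 * ‖x k - y k‖ ^ 2 := by
  have hdescent := le_add_inner_gradient_add_half_mul_sq_norm (H.hdiff.differentiable one_ne_zero)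
    H.hlip (y k) (x (k + 1))
  have htangent := H.hconv.add_inner_gradient_le (H.hdiff.differentiable one_ne_zero (y k)) (x k)
  have hpenalty := sum_rpow_le_sum_rpow_add_weighted_abs_sub H.hp0.le H.hp1.le (H.eps_pos k)
    (fun i => (H.eps_pos (k + 1) i).le) (H.eps_succ_le k) (x k) (x (k + 1))
  have hprox := (subObj_strongConvexOn β f (x k) (y k) H.hp0.le H.hlam.le
    fun i => (H.eps_pos k i).le).add_mul_sq_norm_sub_le_of_isMinOn (H.isMinOn_subObj k)
    (mem_univ _) (mem_univ (x k))
  have hLβ : Lf / 2 * ‖x (k + 1) - y k‖ ^ 2 ≤ β / 2 * ‖x (k + 1) - y k‖ ^ 2 := by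
    gcongr; exact H.hβ.le
  simp only [subObj, inner_sub_right] at hprox hdescent htangent
  simp only [psiObj, Fobj, norm_sub_rev (x (k + 1)) (x k)]
  linarith [mul_le_mul_of_nonneg_left hpenalty H.hlam.le]

theorem norm_sub_le_mul_norm_sub_pred (H : EIRL1 n p lam β Lf μ αbar f x y ε α) (k : ℕ) :
    ‖x k - y k‖ ≤ αbar * ‖x k - x (k - 1)‖ := by
  rw [H.hy k, sub_add_cancel_left, norm_neg, norm_smul, Real.norm_of_nonneg (H.hα0 k)]
  gcongr
  exact H.hα1 k

theorem psiObj_succ_add_le (H : EIRL1 n p lam β Lf μ αbar f x y ε α) (k : ℕ) :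
    psiObj n p lam β f (x (k + 1)) (x k) (ε (k + 1))
        + β / 2 * (1 - αbar ^ 2) * ‖x k - x (k - 1)‖ ^ 2
      ≤ psiObj n p lam β f (x k) (x (k - 1)) (ε k) := by
  have hgap := pow_le_pow_left₀ (norm_nonneg _) (H.norm_sub_le_mul_norm_sub_pred k) 2
  have := mul_le_mul_of_nonneg_left hgap (half_pos H.beta_pos).le
  have := H.psiObj_succ_le k
  simp only [psiObj] at *
  linarith

theorem psiObj_le (H : EIRL1 n p lam β Lf μ αbar f x y ε α) (k : ℕ) :
    psiObj n p lam β f (x k) (x (k - 1)) (ε k) ≤ Fobj n p lam f (x 0) (ε 0) := by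
  have hanti : Antitone fun k => psiObj n p lam β f (x k) (x (k - 1)) (ε k) :=
    antitone_nat_of_succ_le fun k => le_of_add_le_of_nonneg_left (H.psiObj_succ_add_le k)
      (mul_nonneg H.beta_half_mul_one_sub_sq_pos.le (sq_nonneg _))
  simpa [psiObj] using hanti (Nat.zero_le k)

theorem bddBelow_psiObj (H : EIRL1 n p lam β Lf μ αbar f x y ε α) :
    BddBelow (range fun k => psiObj n p lam β f (x k) (x (k - 1)) (ε k)) := by
  obtain ⟨m, hm⟩ := (H.hlevel.isCompact_closure.bddBelow_image
    H.hdiff.continuous.continuousOn : BddBelow (f '' closure _))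
  refine ⟨m, forall_mem_range.2 fun k => ?_⟩
  have hFk : f (x k) ≤ Fobj n p lam f (x k) (ε k) := (le_Fobj_zero H.hlam.le f (x k)).trans
    (Fobj_mono H.hp0.le H.hlam.le f (x k) le_rfl fun i => (H.eps_pos k i).le)
  have hlevel : x k ∈ {z : Vec n | Fobj n p lam f z 0 ≤ Fobj n p lam f (x 0) (ε 0)} :=
    (Fobj_mono H.hp0.le H.hlam.le f (x k) le_rfl fun i => (H.eps_pos k i).le).trans <|
      (le_add_of_nonneg_right (by positivity [H.beta_pos])).trans (H.psiObj_le k)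
  calc m ≤ f (x k) := hm (mem_image_of_mem f (subset_closure hlevel))
    _ ≤ _ := hFk.trans (le_add_of_nonneg_right (by positivity [H.beta_pos]))

end EIRL1

/-- Lemma 2.1(iv): the extrapolation gaps vanish:
`‖yᵏ − xᵏ‖ → 0` and `‖yᵏ⁻¹ − xᵏ‖ → 0`. -/
theorem stmt_3 (n : ℕ) (p lam β Lf μ αbar : ℝ) (f : Vec n → ℝ)
    (x y : ℕ → Vec n) (ε : ℕ → Fin n → ℝ) (α : ℕ → ℝ)
    (H : EIRL1 n p lam β Lf μ αbar f x y ε α) :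
    Tendsto (fun k => ‖y k - x k‖) atTop (nhds 0) ∧
      Tendsto (fun k => ‖y k - x (k + 1)‖) atTop (nhds 0) := by
  have hc := H.beta_half_mul_one_sub_sq_pos
  have hsq : Tendsto (fun k => β / 2 * (1 - αbar ^ 2) * ‖x k - x (k - 1)‖ ^ 2) atTop (𝓝 0) :=
    tendsto_zero_of_add_le_of_bddBelow H.bddBelow_psiObj (fun k => by positivity)
      H.psiObj_succ_add_le
  have hdist : Tendsto (fun k => ‖x k - x (k - 1)‖) atTop (𝓝 0) := by
    have := (hsq.div_const (β / 2 * (1 - αbar ^ 2))).sqrt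
    rw [zero_div, Real.sqrt_zero] at this
    refine this.congr fun k => ?_
    rw [mul_div_cancel_left₀ _ hc.ne', Real.sqrt_sq (norm_nonneg _)]
  have hgap : Tendsto (fun k => ‖y k - x k‖) atTop (𝓝 0) :=
    squeeze_zero (fun _ => norm_nonneg _)
      (fun k => (norm_sub_rev _ _).trans_le (H.norm_sub_le_mul_norm_sub_pred k))
      (by simpa using hdist.const_mul αbar)
  refine ⟨hgap, squeeze_zero (fun _ => norm_nonneg _)
    (fun k => (norm_sub_le_norm_sub_add_norm_sub _ (x k) _).trans_eq (by rw [norm_sub_rev (x k)]))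
    ?_⟩
  simpa using hgap.add (hdist.comp (tendsto_add_atTop_nat 1))
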